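/- In the Weyl algebra A₁ with [β, γ] = −1, the module ℂ[x]·u₀ ⊕ ℂ[y]·u₁ with action β u₀ = 0, γ u₁ = u₀ (where γ acts on ℂ[x]·u₀ by multiplication, i.e., γ·(xⁿ u₀) corresponds to x^{n+1}u₀, and β acts on the β-generated part similarly) has a unique proper nonzero submodule, namely the submodule generated by u₀, which is isomorphic to the simple highest weight module generated by a vector killed by β; hence the module is indecomposable but not simple. -/

import Mathlib

/- The A₁-module N₀⁺ with basis {γⁿ u₀ : n ≥ 0} ∪ {βⁿ u₁ : n ≥ 0}
   (encoded by ℕ ⊕ ℕ: inl n ↔ γⁿ u₀, inr n ↔ βⁿ u₁), where β u₀ = 0,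
   γ u₁ = u₀ and β, γ act otherwise freely.  It has a unique proper nonzero
   invariant subspace, namely the one generated by u₀ (a simple highest
   weight module whose generator is killed by β); hence N₀⁺ is
   indecomposable but not simple. -/

abbrev NV := (ℕ ⊕ ℕ) →₀ ℂ

/-- γ on basis vectors: γ(γⁿu₀) = γⁿ⁺¹u₀, γ(u₁) = u₀, γ(βⁿ⁺¹u₁) = (n+1)βⁿu₁. -/
noncomputable def gGen : ℕ ⊕ ℕ → NV
  | Sum.inl n => Finsupp.single (Sum.inl (n + 1)) (1 : ℂ)
  | Sum.inr 0 => Finsupp.single (Sum.inl 0) (1 : ℂ)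
  | Sum.inr (n + 1) => ((n : ℂ) + 1) • Finsupp.single (Sum.inr n) (1 : ℂ)

/-- β on basis vectors: β(u₀) = 0, β(γⁿ⁺¹u₀) = −(n+1)γⁿu₀, β(βⁿu₁) = βⁿ⁺¹u₁. -/
noncomputable def bGen : ℕ ⊕ ℕ → NV
  | Sum.inl 0 => 0
  | Sum.inl (n + 1) => -(((n : ℂ) + 1) • Finsupp.single (Sum.inl n) (1 : ℂ))
  | Sum.inr n => Finsupp.single (Sum.inr (n + 1)) (1 : ℂ)

noncomputable def gAct : NV →ₗ[ℂ] NV := Finsupp.linearCombination ℂ gGen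
noncomputable def bAct : NV →ₗ[ℂ] NV := Finsupp.linearCombination ℂ bGen

/-- The submodule generated by u₀: the span of the γⁿ u₀. -/
noncomputable def U : Submodule ℂ NV :=
  Submodule.span ℂ (Set.range fun n : ℕ => Finsupp.single (Sum.inl n) (1 : ℂ))

/-- eigenvalue of J = γβ on basis vectors -/
noncomputable def eig : ℕ ⊕ ℕ → ℂ
  | Sum.inl n => -(n : ℂ)
  | Sum.inr n => (n : ℂ) + 1

lemma eig_inj : Function.Injective eig := by
  rintro (m | m) (n | n) h <;> simp only [eig] at h
  · have : ((-(m:ℤ) : ℤ) : ℂ) = ((-(n:ℤ) : ℤ) : ℂ) := by push_cast; exact h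
    have := Int.cast_injective (α := ℂ) this
    simp only [neg_inj] at this
    exact congrArg Sum.inl (by exact_mod_cast this)
  · exfalso
    have : ((-(m:ℤ) : ℤ) : ℂ) = (((n:ℤ) + 1 : ℤ) : ℂ) := by push_cast; exact h
    have := Int.cast_injective (α := ℂ) this
    omega
  · exfalso
    have : (((m:ℤ) + 1 : ℤ) : ℂ) = ((-(n:ℤ) : ℤ) : ℂ) := by push_cast; exact h
    have := Int.cast_injective (α := ℂ) this
    omega
  · have : (((m:ℤ) + 1 : ℤ) : ℂ) = (((n:ℤ) + 1 : ℤ) : ℂ) := by push_cast; exact h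
    have := Int.cast_injective (α := ℂ) this
    exact congrArg Sum.inr (by omega)

lemma gAct_single (i : ℕ ⊕ ℕ) (c : ℂ) : gAct (Finsupp.single i c) = c • gGen i :=
  Finsupp.linearCombination_single ℂ c i

lemma bAct_single (i : ℕ ⊕ ℕ) (c : ℂ) : bAct (Finsupp.single i c) = c • bGen i :=
  Finsupp.linearCombination_single ℂ c i

lemma J_single (i : ℕ ⊕ ℕ) :
    gAct (bAct (Finsupp.single i (1 : ℂ))) = eig i • Finsupp.single i (1 : ℂ) := by
  rcases i with (n | n)
  · cases n with
    | zero => simp [bAct_single, gAct_single, bGen, eig]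
    | succ n =>
      simp only [bAct_single, bGen, eig, one_smul, map_neg, map_smul, gAct_single, gGen]
      push_cast
      module
  · simp only [bAct_single, bGen, eig, one_smul, gAct_single, gGen]

lemma J_apply (v : NV) (i : ℕ ⊕ ℕ) : gAct (bAct v) i = eig i * v i := by
  induction v using Finsupp.induction_linear with
  | zero => simp
  | add f g hf hg => simp [map_add, Finsupp.add_apply, hf, hg, mul_add]
  | single a b =>
    have : Finsupp.single a b = b • Finsupp.single a (1 : ℂ) := by
      rw [Finsupp.smul_single, smul_eq_mul, mul_one]
    rw [this, map_smul, map_smul, J_single]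
    simp only [Finsupp.smul_apply, Finsupp.single_apply, smul_eq_mul]
    split_ifs with h
    · subst h; ring
    · ring

section Key
variable (N : Submodule ℂ NV)
variable (hb : ∀ v ∈ N, bAct v ∈ N) (hg : ∀ v ∈ N, gAct v ∈ N)

include hb hg in
/-- any invariant subspace contains the basis vectors occurring in its elements -/
lemma single_mem_of_mem :
    ∀ (k : ℕ) (v : NV), v.support.card = k → v ∈ N →
      ∀ i ∈ v.support, Finsupp.single i (1 : ℂ) ∈ N := by
  intro k
  induction k using Nat.strong_induction_on with
  | _ k IH =>
    intro v hcard hv i hi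
    by_cases hex : ∃ j ∈ v.support, j ≠ i
    · obtain ⟨j, hj, hji⟩ := hex
      set w : NV := gAct (bAct v) - eig j • v with hw
      have hwN : w ∈ N := Submodule.sub_mem N (hg _ (hb _ hv)) (Submodule.smul_mem N _ hv)
      have hwap : ∀ l, w l = (eig l - eig j) * v l := by
        intro l
        simp [hw, Finsupp.sub_apply, Finsupp.smul_apply, J_apply, sub_mul]
      have hsupp : w.support = v.support.erase j := by
        ext l
        simp only [Finsupp.mem_support_iff, Finset.mem_erase, hwap, mul_ne_zero_iff,
          sub_ne_zero]
        constructor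
        · rintro ⟨h1, h2⟩; exact ⟨fun e => h1 (by rw [e]), h2⟩
        · rintro ⟨h1, h2⟩; exact ⟨fun e => h1 (eig_inj e), h2⟩
      have hcard' : w.support.card < k := by
        rw [hsupp, ← hcard]
        exact Finset.card_erase_lt_of_mem hj
      have hiw : i ∈ w.support := by
        rw [hsupp]; exact Finset.mem_erase.2 ⟨fun e => hji e.symm, hi⟩
      exact IH _ hcard' w rfl hwN i hiw
    · push_neg at hex
      have hsub : v.support ⊆ {i} := fun j hj => Finset.mem_singleton.2 (hex j hj)
      have hv' : v = Finsupp.single i (v i) := Finsupp.support_subset_singleton.1 hsub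
      have hvi : v i ≠ 0 := Finsupp.mem_support_iff.1 hi
      have h2 := Submodule.smul_mem N (v i)⁻¹ hv
      nth_rewrite 2 [hv'] at h2
      rwa [Finsupp.smul_single, smul_eq_mul, inv_mul_cancel₀ hvi] at h2

include hb in
lemma inl_zero_mem (n : ℕ) (h : Finsupp.single (Sum.inl n) (1 : ℂ) ∈ N) :
    Finsupp.single (Sum.inl 0) (1 : ℂ) ∈ N := by
  induction n with
  | zero => exact h
  | succ n IH =>
    apply IH
    have := hb _ h
    rw [bAct_single, one_smul] at this
    simp only [bGen] at this
    have h2 := Submodule.smul_mem N (-((n : ℂ) + 1))⁻¹ this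
    have hne : -((n : ℂ) + 1) ≠ 0 := neg_ne_zero.2 (Nat.cast_add_one_ne_zero n)
    rwa [← neg_smul, smul_smul, inv_mul_cancel₀ hne, one_smul] at h2

include hg in
lemma inl_all_mem (h : Finsupp.single (Sum.inl 0) (1 : ℂ) ∈ N) (n : ℕ) :
    Finsupp.single (Sum.inl n) (1 : ℂ) ∈ N := by
  induction n with
  | zero => exact h
  | succ n IH =>
    have := hg _ IH
    rwa [gAct_single, one_smul] at this

include hg in
lemma inr_zero_mem (n : ℕ) (h : Finsupp.single (Sum.inr n) (1 : ℂ) ∈ N) :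
    Finsupp.single (Sum.inr 0) (1 : ℂ) ∈ N := by
  induction n with
  | zero => exact h
  | succ n IH =>
    apply IH
    have := hg _ h
    rw [gAct_single, one_smul] at this
    simp only [gGen] at this
    have h2 := Submodule.smul_mem N ((n : ℂ) + 1)⁻¹ this
    have hne : ((n : ℂ) + 1) ≠ 0 := Nat.cast_add_one_ne_zero n
    rwa [smul_smul, inv_mul_cancel₀ hne, one_smul] at h2

include hb in
lemma inr_all_mem (h : Finsupp.single (Sum.inr 0) (1 : ℂ) ∈ N) (n : ℕ) :
    Finsupp.single (Sum.inr n) (1 : ℂ) ∈ N := by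
  induction n with
  | zero => exact h
  | succ n IH =>
    have := hb _ IH
    rw [bAct_single, one_smul] at this
    exact this

lemma eq_top_of_all_single (h : ∀ i, Finsupp.single i (1 : ℂ) ∈ N) : N = ⊤ := by
  rw [eq_top_iff]
  rintro v -
  induction v using Finsupp.induction with
  | zero => exact N.zero_mem
  | single_add a b f _ _ IH =>
    refine N.add_mem ?_ IH
    have := Submodule.smul_mem N b (h a)
    rwa [Finsupp.smul_single, smul_eq_mul, mul_one] at this

end Key

lemma U_eq : U = Finsupp.supported ℂ ℂ (Set.range Sum.inl) := by
  rw [Finsupp.supported_eq_span_single, U, ← Set.range_comp]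
  rfl

lemma mem_U_iff (v : NV) : v ∈ U ↔ ∀ n, v (Sum.inr n) = 0 := by
  rw [U_eq, Finsupp.mem_supported]
  constructor
  · intro h n
    by_contra h0
    have : Sum.inr n ∈ v.support := Finsupp.mem_support_iff.2 h0
    obtain ⟨m, hm⟩ := h this
    exact absurd hm (by simp)
  · intro h j hj
    rcases j with (m | m)
    · exact ⟨m, rfl⟩
    · exact absurd (h m) (Finsupp.mem_support_iff.1 hj)

lemma single_inl_mem_U (n : ℕ) : Finsupp.single (Sum.inl n) (1 : ℂ) ∈ U :=
  Submodule.subset_span ⟨n, rfl⟩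

lemma single_inr_not_mem_U (n : ℕ) : Finsupp.single (Sum.inr n) (1 : ℂ) ∉ U := by
  intro h
  have := (mem_U_iff _).1 h n
  simp [Finsupp.single_eq_same] at this

lemma rel_single (i : ℕ ⊕ ℕ) :
    bAct (gAct (Finsupp.single i (1 : ℂ))) - gAct (bAct (Finsupp.single i (1 : ℂ)))
      = -(Finsupp.single i (1 : ℂ)) := by
  rcases i with (n | n)
  · rw [J_single, gAct_single, one_smul]
    simp only [gGen, eig, bAct_single, one_smul, bGen]
    push_cast
    module
  · cases n with
    | zero =>
      rw [J_single, gAct_single, one_smul]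
      simp only [gGen, eig, bAct_single, one_smul, bGen]
      push_cast
      module
    | succ n =>
      rw [J_single, gAct_single, one_smul]
      simp only [gGen, eig, map_smul, bAct_single, one_smul, bGen]
      push_cast
      module

lemma weyl_rel (v : NV) : bAct (gAct v) - gAct (bAct v) = -v := by
  induction v using Finsupp.induction_linear with
  | zero => simp
  | add f g hf hg =>
    simp only [map_add]
    rw [show bAct (gAct f) + bAct (gAct g) - (gAct (bAct f) + gAct (bAct g))
        = (bAct (gAct f) - gAct (bAct f)) + (bAct (gAct g) - gAct (bAct g)) by abel,
      hf, hg]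
    abel
  | single a b =>
    have h : Finsupp.single a b = b • Finsupp.single a (1 : ℂ) := by
      rw [Finsupp.smul_single, smul_eq_mul, mul_one]
    rw [h, map_smul, map_smul, map_smul, map_smul, ← smul_sub, rel_single, smul_neg]

lemma U_binv : ∀ v ∈ U, bAct v ∈ U := by
  intro v hv
  induction hv using Submodule.span_induction with
  | mem x hx =>
    obtain ⟨n, rfl⟩ := hx
    cases n with
    | zero => simp [bAct_single, bGen]
    | succ n =>
      rw [bAct_single, one_smul]
      simp only [bGen]
      exact Submodule.neg_mem U (Submodule.smul_mem U _ (single_inl_mem_U n))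
  | zero => simp
  | add x y _ _ hx hy => rw [map_add]; exact Submodule.add_mem U hx hy
  | smul c x _ hx => rw [map_smul]; exact Submodule.smul_mem U c hx

lemma U_ginv : ∀ v ∈ U, gAct v ∈ U := by
  intro v hv
  induction hv using Submodule.span_induction with
  | mem x hx =>
    obtain ⟨n, rfl⟩ := hx
    rw [gAct_single, one_smul]
    exact single_inl_mem_U (n + 1)
  | zero => simp
  | add x y _ _ hx hy => rw [map_add]; exact Submodule.add_mem U hx hy
  | smul c x _ hx => rw [map_smul]; exact Submodule.smul_mem U c hx

lemma U_le_of_inl_mem (N : Submodule ℂ NV) (hg : ∀ v ∈ N, gAct v ∈ N)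
    (h : Finsupp.single (Sum.inl 0) (1 : ℂ) ∈ N) : U ≤ N := by
  rw [U]
  apply Submodule.span_le.2
  rintro _ ⟨n, rfl⟩
  exact inl_all_mem N hg h n


theorem N0plus_unique_proper_submodule :
    -- the Weyl relation [β, γ] = −1 holds
    (∀ v : NV, bAct (gAct v) - gAct (bAct v) = -v) ∧
    -- u₀ is killed by β and U is invariant
    bAct (Finsupp.single (Sum.inl 0) (1 : ℂ)) = 0 ∧
    (∀ v ∈ U, bAct v ∈ U) ∧ (∀ v ∈ U, gAct v ∈ U) ∧
    U ≠ ⊥ ∧ U ≠ ⊤ ∧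
    -- U is the unique proper nonzero invariant submodule
    (∀ N : Submodule ℂ NV,
      (∀ v ∈ N, bAct v ∈ N) → (∀ v ∈ N, gAct v ∈ N) → N = ⊥ ∨ N = ⊤ ∨ N = U) ∧
    -- U itself is simple (the simple highest weight module)
    (∀ N : Submodule ℂ NV, (∀ v ∈ N, bAct v ∈ N) → (∀ v ∈ N, gAct v ∈ N) →
      N ≤ U → N = ⊥ ∨ N = U) := by
  have hbu0 : bAct (Finsupp.single (Sum.inl 0) (1 : ℂ)) = 0 := by
    simp [bAct_single, bGen]
  refine ⟨weyl_rel, hbu0, U_binv, U_ginv, ?_, ?_, ?_, ?_⟩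
  · intro h
    have := single_inl_mem_U 0
    rw [h, Submodule.mem_bot] at this
    rw [Finsupp.single_eq_zero] at this
    exact one_ne_zero this
  · intro h
    exact single_inr_not_mem_U 0 (h ▸ Submodule.mem_top)
  · intro N hb hg
    by_cases hbot : N = ⊥
    · exact Or.inl hbot
    obtain ⟨v, hvN, hv0⟩ := Submodule.ne_bot_iff N |>.1 hbot
    obtain ⟨i, hi⟩ := Finsupp.support_nonempty_iff.2 hv0
    have hkey := single_mem_of_mem N hb hg v.support.card v rfl hvN
    by_cases hinr : ∃ n, Finsupp.single (Sum.inr n) (1 : ℂ) ∈ N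
    · -- N = ⊤
      obtain ⟨n, hn⟩ := hinr
      have h0r : Finsupp.single (Sum.inr 0) (1 : ℂ) ∈ N := inr_zero_mem N hg n hn
      have h0l : Finsupp.single (Sum.inl 0) (1 : ℂ) ∈ N := by
        have := hg _ h0r
        rwa [gAct_single, one_smul] at this
      refine Or.inr (Or.inl (eq_top_of_all_single N ?_))
      rintro (m | m)
      · exact inl_all_mem N hg h0l m
      · exact inr_all_mem N hb h0r m
    · -- N = U
      push_neg at hinr
      refine Or.inr (Or.inr (le_antisymm ?_ ?_))
      · intro w hw
        rw [mem_U_iff]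
        intro n
        by_contra h0
        exact hinr n (single_mem_of_mem N hb hg w.support.card w rfl hw _
          (Finsupp.mem_support_iff.2 h0))
      · have hiN := hkey i hi
        rcases i with (m | m)
        · exact U_le_of_inl_mem N hg (inl_zero_mem N hb m hiN)
        · exact absurd hiN (hinr m)
  · intro N hb hg hle
    by_cases hbot : N = ⊥
    · exact Or.inl hbot
    obtain ⟨v, hvN, hv0⟩ := Submodule.ne_bot_iff N |>.1 hbot
    obtain ⟨i, hi⟩ := Finsupp.support_nonempty_iff.2 hv0
    have hiN := single_mem_of_mem N hb hg v.support.card v rfl hvN i hi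
    rcases i with (m | m)
    · exact Or.inr (le_antisymm hle (U_le_of_inl_mem N hg (inl_zero_mem N hb m hiN)))
    · exact absurd (hle hiN) (single_inr_not_mem_U m)
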